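/- Fix β > log 4. There exists a critical value K_c^{(1)}(β) > 0 such that: (a) for every 0 < K < K_c^{(1)}(β), Ẽ_{β,K} = {0}; (b) for K = K_c^{(1)}(β) there exists z̃(β,K) > 0 such that Ẽ_{β,K} = {0, z̃(β,K), −z̃(β,K)}; (c) for every K > K_c^{(1)}(β) there exists z̃(β,K) > 0 such that Ẽ_{β,K} = {z̃(β,K), −z̃(β,K)}; (d) the function K ↦ z̃(β,K) is strictly increasing and continuous on [K_c^{(1)}(β), ∞), and z̃(β, K_c^{(1)}(β)) > 0. -/

import Mathlib

noncomputable section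

/-- `c_β(t) = log[(1 + e^{−β}(e^t + e^{−t}))/(1 + 2e^{−β})]`. -/
def cBeta (β t : ℝ) : ℝ :=
  Real.log ((1 + Real.exp (-β) * (Real.exp t + Real.exp (-t))) / (1 + 2 * Real.exp (-β)))

/-- `J_β(z) = sup_{t ∈ ℝ} {t z − c_β(t)}`, the Legendre–Fenchel transform of `c_β`
(finite on `[-1,1]`, where it is used below). -/
def Jbeta (β z : ℝ) : ℝ := ⨆ t : ℝ, (t * z - cBeta β t)

/-- `Ẽ_{β,K}`: the set of `z ∈ [-1,1]` minimizing `J_β(z) − βK z²` over `[-1,1]`. -/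
def tildeE (β K : ℝ) : Set ℝ :=
  {z | z ∈ Set.Icc (-1 : ℝ) 1 ∧
    ∀ y ∈ Set.Icc (-1 : ℝ) 1, Jbeta β z - β * K * z ^ 2 ≤ Jbeta β y - β * K * y ^ 2}

/-!
Write `ε = e^{-β}`, `c = c_β` and `κ = 2βK`. Legendre duality turns the minimization of
`J_β(z) - βK z²` over `[-1,1]` into that of `G_κ(t) = t²/(2κ) - c(t)` over `ℝ`, the minimizers
corresponding through `z = c'(t)`. A stationary point `t > 0` of `G_κ` solves `Λ(t) = κ`, where
`Λ(t) = t / c'(t)`. For `ε < 1/4` the function `c''` first increases and then decreases on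
`[0, ∞)`; this makes `Λ` decrease on `(0, τ]` and increase on `[τ, ∞)`, and makes
`r(t) = G_{Λ(t)}(t) = t c'(t)/2 - c(t)` positive up to a single zero `t₀ > τ` and negative
beyond it. So the minimum of `G_κ` is attained at `0` alone, at `0` and `±t₂`, or at `±t₂` alone,
where `t₂ = t₂(κ) ≥ τ` is the largest stationary point, according as `κ <, =, > Λ(t₀)`. Hence
`K_c = Λ(t₀)/(2β)` and `z̃(K) = c'(t₂(2βK))`, with `t₂` the inverse of `Λ` on `[τ, ∞)`.
-/

open Real Set Filter Topology

lemma lt_max_of_strictAntiOn_of_strictMonoOn {f : ℝ → ℝ} {l τ a s b : ℝ}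
    (hanti : StrictAntiOn f (Ioc l τ)) (hmono : StrictMonoOn f (Ici τ))
    (hla : l < a) (has : a < s) (hsb : s < b) : f s < max (f a) (f b) := by
  rcases le_total s τ with hsτ | hτs
  · exact lt_max_of_lt_left (hanti ⟨hla, has.le.trans hsτ⟩ ⟨hla.trans has, hsτ⟩ has)
  · exact lt_max_of_lt_right (hmono hτs (hτs.trans hsb.le) hsb)

lemma exists_sign_change_of_strictAntiOn {f : ℝ → ℝ} {a b : ℝ} (ha : 0 < a)
    (hcont : ContinuousOn f (Ici a)) (hpos : ∀ t ∈ Ioc 0 a, 0 < f t)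
    (hanti : StrictAntiOn f (Ici a)) (hab : a ≤ b) (hb : f b < 0) :
    ∃ c, a < c ∧ f c = 0 ∧ (∀ t ∈ Ioo 0 c, 0 < f t) ∧ ∀ t ∈ Ioi c, f t < 0 := by
  have hfa : 0 < f a := hpos a ⟨ha, le_rfl⟩
  obtain ⟨c, hc, hfc⟩ := intermediate_value_Icc' hab (hcont.mono Icc_subset_Ici_self)
    ⟨hb.le, hfa.le⟩
  have hac : a < c := hc.1.lt_of_ne (by rintro rfl; linarith)
  refine ⟨c, hac, hfc, fun t ht => ?_, fun t ht => ?_⟩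
  · rcases le_or_gt t a with hta | hat
    · exact hpos t ⟨ht.1, hta⟩
    · exact hfc ▸ hanti hat.le hac.le ht.2
  · exact hfc ▸ hanti hac.le (hac.le.trans (le_of_lt ht)) ht

lemma StrictMonoOn.continuousOn_Ici_of_image_eq {f : ℝ → ℝ} {a b : ℝ}
    (hf : StrictMonoOn f (Ici a)) (himg : f '' Ici a = Ici b) : ContinuousOn f (Ici a) := by
  have hfa : f a = b := by
    obtain ⟨x, hx, hxb⟩ : b ∈ f '' Ici a := himg ▸ self_mem_Ici
    have hle : f a ≤ b := hxb ▸ hf.monotoneOn self_mem_Ici hx hx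
    exact hle.antisymm (himg ▸ mem_image_of_mem f self_mem_Ici : f a ∈ Ici b)
  intro x hx
  rcases (mem_Ici.1 hx).eq_or_lt with rfl | hax
  · refine hf.continuousWithinAt_right_of_image_mem_nhdsWithin self_mem_nhdsWithin ?_
    rw [himg, hfa]
    exact self_mem_nhdsWithin
  · refine (hf.continuousAt_of_image_mem_nhds (Ici_mem_nhds hax) ?_).continuousWithinAt
    rw [himg]
    exact Ici_mem_nhds (hfa ▸ hf self_mem_Ici hx hax)

lemma exists_strictMonoOn_rightInvOn_Ici {f : ℝ → ℝ} {a : ℝ} (hf : StrictMonoOn f (Ici a))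
    (hcont : ContinuousOn f (Ici a)) (htop : Tendsto f atTop atTop) :
    ∃ g : ℝ → ℝ, StrictMonoOn g (Ici (f a)) ∧ ContinuousOn g (Ici (f a)) ∧
      ∀ y ∈ Ici (f a), g y ∈ Ici a ∧ f (g y) = y := by
  have hsurj : SurjOn f (Ici a) (Ici (f a)) := intermediate_value_Ici hcont htop
  set g := Function.invFunOn f (Ici a)
  have hg : ∀ y ∈ Ici (f a), g y ∈ Ici a ∧ f (g y) = y := fun y hy =>
    ⟨Function.invFunOn_mem (hsurj hy), Function.invFunOn_eq (hsurj hy)⟩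
  have hmono : StrictMonoOn g (Ici (f a)) := fun y hy y' hy' hyy' => by
    rw [← hf.lt_iff_lt (hg y hy).1 (hg y' hy').1, (hg y hy).2, (hg y' hy').2]
    exact hyy'
  refine ⟨g, hmono, hmono.continuousOn_Ici_of_image_eq (b := a) ?_, hg⟩
  refine (image_subset_iff.2 fun y hy => (hg y hy).1).antisymm fun x hx => ?_
  have hfx : f x ∈ Ici (f a) := hf.monotoneOn self_mem_Ici hx hx
  exact ⟨f x, hfx, hf.injOn (hg _ hfx).1 hx (hg _ hfx).2⟩

namespace BlumeCapel

/-- With `ε = e^{-β}` this is `c_β`, as `e^t + e^{-t} = 2 cosh t`: the cumulant generating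
function of a spin `X ∈ {-1, 0, 1}` with law proportional to `(ε, 1, ε)`. -/
def cgf (ε t : ℝ) : ℝ := log (1 + 2 * ε * cosh t) - log (1 + 2 * ε)

def tiltedMean (ε t : ℝ) : ℝ := 2 * ε * sinh t / (1 + 2 * ε * cosh t)

def tiltedVar (ε t : ℝ) : ℝ := (2 * ε * cosh t + 4 * ε ^ 2) / (1 + 2 * ε * cosh t) ^ 2

variable {ε : ℝ}

lemma one_add_two_mul_cosh_pos (hε : 0 ≤ ε) (t : ℝ) : 0 < 1 + 2 * ε * cosh t := by
  positivity

lemma cgf_zero : cgf ε 0 = 0 := by simp [cgf]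

lemma cgf_neg (t : ℝ) : cgf ε (-t) = cgf ε t := by simp [cgf]

lemma tiltedMean_zero : tiltedMean ε 0 = 0 := by simp [tiltedMean]

lemma tiltedMean_neg (t : ℝ) : tiltedMean ε (-t) = -tiltedMean ε t := by
  simp [tiltedMean, neg_div]

lemma hasDerivAt_cgf (hε : 0 ≤ ε) (t : ℝ) : HasDerivAt (cgf ε) (tiltedMean ε t) t := by
  have hA := ((hasDerivAt_cosh t).const_mul (2 * ε)).const_add 1
  exact (hA.log (one_add_two_mul_cosh_pos hε t).ne').sub_const _

lemma hasDerivAt_tiltedMean (hε : 0 ≤ ε) (t : ℝ) :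
    HasDerivAt (tiltedMean ε) (tiltedVar ε t) t := by
  have hA := ((hasDerivAt_cosh t).const_mul (2 * ε)).const_add 1
  refine (((hasDerivAt_sinh t).const_mul (2 * ε)).div hA
    (one_add_two_mul_cosh_pos hε t).ne').congr_deriv ?_
  rw [tiltedVar]
  congr 1
  linear_combination (4 * ε ^ 2) * cosh_sq_sub_sinh_sq t

lemma continuous_tiltedMean (hε : 0 ≤ ε) : Continuous (tiltedMean ε) :=
  continuous_iff_continuousAt.2 fun t => (hasDerivAt_tiltedMean hε t).continuousAt

lemma continuous_tiltedVar (hε : 0 ≤ ε) : Continuous (tiltedVar ε) :=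
  Continuous.div (by fun_prop) (by fun_prop) fun t =>
    (pow_pos (one_add_two_mul_cosh_pos hε t) 2).ne'

lemma tiltedVar_pos (hε : 0 < ε) (t : ℝ) : 0 < tiltedVar ε t := by
  unfold tiltedVar; positivity

lemma tiltedMean_strictMono (hε : 0 < ε) : StrictMono (tiltedMean ε) :=
  strictMono_of_deriv_pos fun t => (hasDerivAt_tiltedMean hε.le t).deriv ▸ tiltedVar_pos hε t

lemma abs_tiltedMean_lt_one (hε : 0 ≤ ε) (t : ℝ) : |tiltedMean ε t| < 1 := by
  have hA := one_add_two_mul_cosh_pos hε t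
  have hsinh : |sinh t| < cosh t := by rw [abs_sinh, ← cosh_abs]; exact sinh_lt_cosh _
  rw [tiltedMean, abs_div, abs_of_pos hA, div_lt_one hA, abs_mul, abs_of_nonneg (by positivity)]
  nlinarith

lemma tiltedMean_mem_Icc (hε : 0 ≤ ε) (t : ℝ) : tiltedMean ε t ∈ Icc (-1) 1 :=
  abs_le.1 (abs_tiltedMean_lt_one hε t).le

lemma tiltedMean_pos (hε : 0 < ε) {t : ℝ} (ht : 0 < t) : 0 < tiltedMean ε t := by
  have := sinh_pos_iff.2 ht
  have := one_add_two_mul_cosh_pos hε.le t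
  unfold tiltedMean; positivity

lemma abs_add_log_le_cgf (hε : 0 < ε) (t : ℝ) :
    |t| + log ε - log (1 + 2 * ε) ≤ cgf ε t := by
  have hexp : ε * exp |t| ≤ 1 + 2 * ε * cosh t := by
    rw [← cosh_abs, cosh_eq]
    nlinarith [exp_pos (-|t|)]
  have := log_le_log (by positivity) hexp
  rw [log_mul hε.ne' (exp_pos _).ne', log_exp] at this
  unfold cgf; linarith

lemma cgf_add_tiltedMean_mul_le (hε : 0 < ε) (t s : ℝ) :
    cgf ε t + tiltedMean ε t * (s - t) ≤ cgf ε s := by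
  have hderiv : deriv (cgf ε) = tiltedMean ε :=
    funext fun t => (hasDerivAt_cgf hε.le t).deriv
  have hconv : ConvexOn ℝ univ (cgf ε) :=
    Monotone.convexOn_univ_of_deriv (fun t => (hasDerivAt_cgf hε.le t).differentiableAt)
      (hderiv ▸ (tiltedMean_strictMono hε).monotone)
  rcases lt_trichotomy t s with hts | rfl | hst
  · have := hconv.le_slope_of_hasDerivAt trivial trivial hts (hasDerivAt_cgf hε.le t)
    rw [slope_def_field, le_div_iff₀ (sub_pos.2 hts)] at this
    linarith
  · simp
  · have := hconv.slope_le_of_hasDerivAt trivial trivial hst (hasDerivAt_cgf hε.le t)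
    rw [slope_def_field, div_le_iff₀ (sub_pos.2 hst)] at this
    linarith

lemma cBeta_eq_cgf (β : ℝ) : cBeta β = cgf (exp (-β)) := by
  funext t
  have hA : 1 + exp (-β) * (exp t + exp (-t)) = 1 + 2 * exp (-β) * cosh t := by
    rw [cosh_eq]; ring
  rw [cBeta, cgf, hA, log_div (one_add_two_mul_cosh_pos (exp_pos _).le t).ne' (by positivity)]

lemma le_Jbeta {β z : ℝ} (hz : z ∈ Icc (-1) 1) (t : ℝ) : t * z - cBeta β t ≤ Jbeta β z := by
  refine le_ciSup (f := fun t => t * z - cBeta β t)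
    ⟨log (1 + 2 * exp (-β)) - log (exp (-β)), ?_⟩ t
  rintro _ ⟨s, rfl⟩
  have hsz : s * z ≤ |s| :=
    (le_abs_self _).trans (abs_mul s z ▸ mul_le_of_le_one_right (abs_nonneg s) (abs_le.2 hz))
  have := abs_add_log_le_cgf (exp_pos (-β)) s
  simp only [cBeta_eq_cgf]
  linarith

lemma Jbeta_tiltedMean (β t : ℝ) :
    Jbeta β (tiltedMean (exp (-β)) t) = t * tiltedMean (exp (-β)) t - cgf (exp (-β)) t := by
  refine le_antisymm (ciSup_le fun s => ?_) ?_
  · rw [cBeta_eq_cgf]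
    linarith [cgf_add_tiltedMean_mul_le (exp_pos (-β)) t s]
  · simpa [cBeta_eq_cgf] using le_Jbeta (tiltedMean_mem_Icc (exp_pos (-β)).le t) t

/-- For `ε = e^{-β}` and `κ = 2βK`, `dualFreeEnergy ε κ (κ x) = βK x² - c_β(2βK x)`. -/
def dualFreeEnergy (ε κ t : ℝ) : ℝ := t ^ 2 / (2 * κ) - cgf ε t

def dualMinimizers (ε κ : ℝ) : Set ℝ := {t | ∀ s, dualFreeEnergy ε κ t ≤ dualFreeEnergy ε κ s}

variable {κ : ℝ}

lemma dualFreeEnergy_zero : dualFreeEnergy ε κ 0 = 0 := by simp [dualFreeEnergy, cgf_zero]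

lemma dualFreeEnergy_neg (t : ℝ) : dualFreeEnergy ε κ (-t) = dualFreeEnergy ε κ t := by
  simp [dualFreeEnergy, cgf_neg]

lemma hasDerivAt_dualFreeEnergy (hε : 0 ≤ ε) (t : ℝ) :
    HasDerivAt (dualFreeEnergy ε κ) (t / κ - tiltedMean ε t) t := by
  refine (((hasDerivAt_pow 2 t).div_const (2 * κ)).sub (hasDerivAt_cgf hε t)).congr_deriv ?_
  rw [pow_one, Nat.cast_ofNat, mul_div_mul_left _ _ two_ne_zero]

lemma dualFreeEnergy_strictMonoOn (hε : 0 ≤ ε) (hκ : 0 < κ) {D : Set ℝ} (hD : Convex ℝ D)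
    (h : ∀ s ∈ interior D, κ * tiltedMean ε s < s) : StrictMonoOn (dualFreeEnergy ε κ) D := by
  refine strictMonoOn_of_hasDerivWithinAt_pos hD
    (fun t _ => (hasDerivAt_dualFreeEnergy hε t).continuousAt.continuousWithinAt)
    (fun t _ => (hasDerivAt_dualFreeEnergy hε t).hasDerivWithinAt) fun s hs => ?_
  rw [sub_pos, lt_div_iff₀ hκ, mul_comm]
  exact h s hs

lemma dualFreeEnergy_strictAntiOn (hε : 0 ≤ ε) (hκ : 0 < κ) {D : Set ℝ} (hD : Convex ℝ D)
    (h : ∀ s ∈ interior D, s < κ * tiltedMean ε s) : StrictAntiOn (dualFreeEnergy ε κ) D := by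
  refine strictAntiOn_of_hasDerivWithinAt_neg hD
    (fun t _ => (hasDerivAt_dualFreeEnergy hε t).continuousAt.continuousWithinAt)
    (fun t _ => (hasDerivAt_dualFreeEnergy hε t).hasDerivWithinAt) fun s hs => ?_
  rw [sub_neg, div_lt_iff₀ hκ, mul_comm]
  exact h s hs

lemma mul_tiltedMean_eq_of_mem_dualMinimizers (hε : 0 ≤ ε) (hκ : 0 < κ) {t : ℝ}
    (ht : t ∈ dualMinimizers ε κ) : κ * tiltedMean ε t = t := by
  have hmin : IsLocalMin (dualFreeEnergy ε κ) t := Filter.Eventually.of_forall ht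
  have := hmin.hasDerivAt_eq_zero (hasDerivAt_dualFreeEnergy hε t)
  field_simp at this
  linarith

theorem tildeE_eq_image {β K : ℝ} (hβ : 0 < β) (hK : 0 < K) :
    tildeE β K = tiltedMean (exp (-β)) '' dualMinimizers (exp (-β)) (2 * β * K) := by
  set ε := exp (-β)
  set κ := 2 * β * K
  have hε : 0 ≤ ε := (exp_pos _).le
  have hκ : 0 < κ := by positivity
  have hlow : ∀ y ∈ Icc (-1 : ℝ) 1,
      dualFreeEnergy ε κ (κ * y) ≤ Jbeta β y - β * K * y ^ 2 := by
    intro y hy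
    have := le_Jbeta (β := β) hy (κ * y)
    rw [cBeta_eq_cgf] at this
    have hG : dualFreeEnergy ε κ (κ * y) = κ * y * y - cgf ε (κ * y) - β * K * y ^ 2 := by
      simp only [dualFreeEnergy, κ]; field_simp; ring
    linarith
  have hdual : ∀ s, Jbeta β (tiltedMean ε s) - β * K * tiltedMean ε s ^ 2 =
      dualFreeEnergy ε κ s - (s - κ * tiltedMean ε s) ^ 2 / (2 * κ) := by
    intro s
    rw [Jbeta_tiltedMean, dualFreeEnergy]
    field_simp
    ring
  ext z
  constructor
  · rintro ⟨hz, hmin⟩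
    have hzmin : κ * z ∈ dualMinimizers ε κ := fun s =>
      (hlow z hz).trans <| (hmin _ (tiltedMean_mem_Icc hε s)).trans <| by
        rw [hdual]
        linarith [div_nonneg (sq_nonneg (s - κ * tiltedMean ε s)) (by positivity : 0 ≤ 2 * κ)]
    refine ⟨κ * z, hzmin, mul_left_cancel₀ hκ.ne' ?_⟩
    exact mul_tiltedMean_eq_of_mem_dualMinimizers hε hκ hzmin
  · rintro ⟨t, ht, rfl⟩
    refine ⟨tiltedMean_mem_Icc hε t, fun y hy => ?_⟩
    rw [hdual, mul_tiltedMean_eq_of_mem_dualMinimizers hε hκ ht, sub_self]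
    simpa using (ht _).trans (hlow y hy)

lemma strictMonoOn_add_div_one_add_sq {a : ℝ} (ha : 0 ≤ a) :
    StrictMonoOn (fun x : ℝ => (x + a) / (1 + x) ^ 2) (Icc 0 (1 - 2 * a)) := by
  intro x hx y hy hxy
  have hy0 : 0 < y := hx.1.trans_lt hxy
  simp only
  rw [div_lt_div_iff₀ (pow_pos (by linarith [hx.1]) 2) (pow_pos (by linarith) 2)]
  -- The difference of the two sides is `(y - x) * (1 - x * y - a * (2 + x + y))`.
  nlinarith [mul_pos (sub_pos.2 hxy) (mul_pos (sub_pos.2 hxy) (add_pos_of_pos_of_nonneg hy0 ha)),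
    mul_nonneg (sub_pos.2 hxy).le (mul_nonneg hy0.le (sub_nonneg.2 hy.2)),
    mul_nonneg (sub_pos.2 hxy).le (sub_nonneg.2 hy.2)]

lemma strictAntiOn_add_div_one_add_sq {a : ℝ} (ha : 2 * a ≤ 1) :
    StrictAntiOn (fun x : ℝ => (x + a) / (1 + x) ^ 2) (Ici (1 - 2 * a)) := by
  intro x hx y hy hxy
  have hx0 : 0 ≤ x := le_trans (by linarith) hx
  simp only
  rw [div_lt_div_iff₀ (pow_pos (by linarith) 2) (pow_pos (by linarith) 2)]
  have hxa : 0 < x + a := by linarith [mem_Ici.1 hx]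
  nlinarith [mul_pos (sub_pos.2 hxy) (mul_pos (sub_pos.2 hxy) hxa),
    mul_nonneg (sub_pos.2 hxy).le (mul_nonneg hx0 (sub_nonneg.2 (mem_Ici.1 hx))),
    mul_nonneg (sub_pos.2 hxy).le (sub_nonneg.2 (mem_Ici.1 hx))]

lemma tiltedVar_unimodal (hε : 0 < ε) (hε4 : ε < 1 / 4) :
    ∃ T₀ > 0, StrictMonoOn (tiltedVar ε) (Icc 0 T₀) ∧ StrictAntiOn (tiltedVar ε) (Ici T₀) := by
  have hx₀ : 1 < (1 - 8 * ε ^ 2) / (2 * ε) := by rw [lt_div_iff₀ (by positivity)]; nlinarith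
  -- `c''` turns from increasing to decreasing where `2ε cosh t = 1 - 8ε²`.
  set T₀ := arcosh ((1 - 8 * ε ^ 2) / (2 * ε))
  have hT₀ : 2 * ε * cosh T₀ = 1 - 2 * (4 * ε ^ 2) := by
    rw [cosh_arcosh hx₀.le]; field_simp; ring
  have hcosh : StrictMonoOn (fun t => 2 * ε * cosh t) (Ici 0) := fun s hs t ht hst =>
    mul_lt_mul_of_pos_left (cosh_strictMonoOn hs ht hst) (by positivity)
  have hT₀pos : 0 < T₀ := arcosh_pos hx₀
  refine ⟨T₀, hT₀pos, ?_, ?_⟩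
  · refine (strictMonoOn_add_div_one_add_sq (by positivity)).comp
      (hcosh.mono Icc_subset_Ici_self) fun t ht => ⟨by positivity, ?_⟩
    exact hT₀ ▸ hcosh.monotoneOn ht.1 hT₀pos.le ht.2
  · refine (strictAntiOn_add_div_one_add_sq (by nlinarith)).comp_strictMonoOn
      (hcosh.mono (Ici_subset_Ici.2 hT₀pos.le)) fun t ht => ?_
    exact hT₀ ▸ hcosh.monotoneOn hT₀pos.le (hT₀pos.le.trans ht) ht

lemma tiltedVar_le (hε : 0 < ε) (t : ℝ) :
    tiltedVar ε t ≤ (1 + 4 * ε ^ 2) / ε * exp (-t) := by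
  have hx : ε * exp t ≤ 2 * ε * cosh t := by rw [cosh_eq]; nlinarith [exp_pos (-t)]
  have hX : 0 ≤ 2 * ε * cosh t := by positivity
  have hvar : tiltedVar ε t * (ε * exp t) ≤ 1 + 4 * ε ^ 2 := by
    rw [tiltedVar, div_mul_eq_mul_div, div_le_iff₀ (by positivity)]
    nlinarith [mul_le_mul_of_nonneg_left hx (by positivity : 0 ≤ 2 * ε * cosh t + 4 * ε ^ 2),
      mul_nonneg (sq_nonneg ε) (sq_nonneg (2 * ε * cosh t))]
  rw [exp_neg, ← div_eq_mul_inv, div_div, le_div_iff₀ (by positivity)]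
  linarith

lemma tendsto_mul_tiltedVar_atTop (hε : 0 < ε) :
    Tendsto (fun t => t * tiltedVar ε t) atTop (𝓝 0) := by
  have hlim : Tendsto (fun t => (1 + 4 * ε ^ 2) / ε * (t ^ 1 * exp (-t))) atTop (𝓝 0) := by
    simpa using (tendsto_pow_mul_exp_neg_atTop_nhds_zero 1).const_mul ((1 + 4 * ε ^ 2) / ε)
  refine squeeze_zero' ?_ ?_ hlim <;> filter_upwards [eventually_ge_atTop 0] with t ht
  · exact mul_nonneg ht (tiltedVar_pos hε t).le
  · calc t * tiltedVar ε t ≤ t * ((1 + 4 * ε ^ 2) / ε * exp (-t)) := by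
          gcongr; exact tiltedVar_le hε t
      _ = _ := by ring

lemma exists_sign_change_mul_tiltedVar_sub_tiltedMean (hε : 0 < ε) (hε4 : ε < 1 / 4) :
    ∃ τ > 0, (∀ t ∈ Ioo 0 τ, tiltedMean ε t < t * tiltedVar ε t) ∧
      ∀ t ∈ Ioi τ, t * tiltedVar ε t < tiltedMean ε t := by
  obtain ⟨T₀, hT₀, hmono, hanti⟩ := tiltedVar_unimodal hε hε4
  have hmean := hasDerivAt_tiltedMean hε.le
  -- Both sign facts compare the mean value theorem for `tiltedMean` with the shape of `tiltedVar`.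
  have hmvt : ∀ s t, s < t → ∃ ξ ∈ Ioo s t,
      tiltedMean ε t - tiltedMean ε s = tiltedVar ε ξ * (t - s) := fun s t hst => by
    obtain ⟨ξ, hξ, h⟩ := exists_hasDerivAt_eq_slope (tiltedMean ε) (tiltedVar ε) hst
      (continuous_tiltedMean hε.le).continuousOn fun x _ => hmean x
    exact ⟨ξ, hξ, by rw [h, div_mul_cancel₀ _ (sub_pos.2 hst).ne']⟩
  have hpos : ∀ t ∈ Ioc 0 T₀, 0 < t * tiltedVar ε t - tiltedMean ε t := by
    rintro t ⟨ht, htT₀⟩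
    obtain ⟨ξ, hξ, h⟩ := hmvt 0 t ht
    have := hmono ⟨hξ.1.le, hξ.2.le.trans htT₀⟩ ⟨ht.le, htT₀⟩ hξ.2
    rw [tiltedMean_zero] at h
    nlinarith
  have hanti' : StrictAntiOn (fun t => t * tiltedVar ε t - tiltedMean ε t) (Ici T₀) := by
    intro s hs t ht hst
    obtain ⟨ξ, hξ, h⟩ := hmvt s t hst
    have h1 := hanti (hs.trans hξ.1.le) ht hξ.2
    have h2 := hanti hs ht hst
    have hs0 : 0 < s := hT₀.trans_le hs
    simp only
    nlinarith
  obtain ⟨b, hb, hbT₀⟩ := (((tendsto_mul_tiltedVar_atTop hε).eventually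
    (gt_mem_nhds (tiltedMean_pos hε hT₀))).and (eventually_ge_atTop T₀)).exists
  have hcont : Continuous fun t => t * tiltedVar ε t - tiltedMean ε t :=
    (continuous_id.mul (continuous_tiltedVar hε.le)).sub (continuous_tiltedMean hε.le)
  obtain ⟨τ, hτ, -, hpos', hneg⟩ := exists_sign_change_of_strictAntiOn hT₀ hcont.continuousOn
    hpos hanti' hbT₀ (by linarith [(tiltedMean_strictMono hε).monotone hbT₀])
  exact ⟨τ, hT₀.trans hτ, fun t ht => sub_pos.1 (hpos' t ht), fun t ht => sub_neg.1 (hneg t ht)⟩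

/-- The coupling `κ` for which `t` is a stationary point of `dualFreeEnergy ε κ`. -/
def stationaryCoupling (ε t : ℝ) : ℝ := t / tiltedMean ε t

lemma stationaryCoupling_pos (hε : 0 < ε) {t : ℝ} (ht : 0 < t) : 0 < stationaryCoupling ε t :=
  div_pos ht (tiltedMean_pos hε ht)

lemma self_le_stationaryCoupling (hε : 0 < ε) {t : ℝ} (ht : 0 < t) :
    t ≤ stationaryCoupling ε t :=
  le_div_self ht.le (tiltedMean_pos hε ht) (abs_le.1 (abs_tiltedMean_lt_one hε.le t).le).2

lemma mul_tiltedMean_lt_iff (hε : 0 < ε) {s : ℝ} (hs : 0 < s) :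
    κ * tiltedMean ε s < s ↔ κ < stationaryCoupling ε s := by
  rw [stationaryCoupling, lt_div_iff₀ (tiltedMean_pos hε hs)]

lemma lt_mul_tiltedMean_iff (hε : 0 < ε) {s : ℝ} (hs : 0 < s) :
    s < κ * tiltedMean ε s ↔ stationaryCoupling ε s < κ := by
  rw [stationaryCoupling, div_lt_iff₀ (tiltedMean_pos hε hs)]

lemma hasDerivAt_stationaryCoupling (hε : 0 < ε) {t : ℝ} (ht : 0 < t) :
    HasDerivAt (stationaryCoupling ε)
      ((tiltedMean ε t - t * tiltedVar ε t) / tiltedMean ε t ^ 2) t :=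
  ((hasDerivAt_id' t).div (hasDerivAt_tiltedMean hε.le t)
    (tiltedMean_pos hε ht).ne').congr_deriv (by ring)

lemma continuousOn_stationaryCoupling (hε : 0 < ε) :
    ContinuousOn (stationaryCoupling ε) (Ioi 0) := fun _ ht =>
  (hasDerivAt_stationaryCoupling hε ht).continuousAt.continuousWithinAt

lemma tendsto_stationaryCoupling_atTop (hε : 0 < ε) :
    Tendsto (stationaryCoupling ε) atTop atTop :=
  tendsto_atTop_mono' _ ((eventually_gt_atTop 0).mono fun _ ht =>
    self_le_stationaryCoupling hε ht) tendsto_id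

lemma stationaryCoupling_unimodal (hε : 0 < ε) {τ : ℝ} (hτ : 0 < τ)
    (hlt : ∀ t ∈ Ioo 0 τ, tiltedMean ε t < t * tiltedVar ε t)
    (hgt : ∀ t ∈ Ioi τ, t * tiltedVar ε t < tiltedMean ε t) :
    StrictAntiOn (stationaryCoupling ε) (Ioc 0 τ) ∧
      StrictMonoOn (stationaryCoupling ε) (Ici τ) := by
  have hderiv := fun t (ht : 0 < t) => hasDerivAt_stationaryCoupling hε ht
  constructor
  · refine strictAntiOn_of_hasDerivWithinAt_neg (convex_Ioc 0 τ)
      ((continuousOn_stationaryCoupling hε).mono Ioc_subset_Ioi_self)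
      (fun t ht => (hderiv t (interior_subset ht).1).hasDerivWithinAt) fun t ht => ?_
    rw [interior_Ioc] at ht
    exact div_neg_of_neg_of_pos (sub_neg.2 (hlt t ht)) (pow_pos (tiltedMean_pos hε ht.1) 2)
  · refine strictMonoOn_of_hasDerivWithinAt_pos (convex_Ici τ)
      ((continuousOn_stationaryCoupling hε).mono (Ici_subset_Ioi.2 hτ))
      (fun t ht => (hderiv t (hτ.trans_le (interior_subset ht))).hasDerivWithinAt) fun t ht => ?_
    rw [interior_Ici] at ht
    exact div_pos (sub_pos.2 (hgt t ht)) (pow_pos (tiltedMean_pos hε (hτ.trans ht)) 2)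

def criticalValue (ε t : ℝ) : ℝ := t * tiltedMean ε t / 2 - cgf ε t

lemma dualFreeEnergy_stationaryCoupling (hε : 0 < ε) {t : ℝ} (ht : 0 < t) :
    dualFreeEnergy ε (stationaryCoupling ε t) t = criticalValue ε t := by
  have := (tiltedMean_pos hε ht).ne'
  rw [dualFreeEnergy, criticalValue, stationaryCoupling]
  field_simp

lemma hasDerivAt_criticalValue (hε : 0 ≤ ε) (t : ℝ) :
    HasDerivAt (criticalValue ε) ((t * tiltedVar ε t - tiltedMean ε t) / 2) t := by
  refine ((((hasDerivAt_id' t).mul (hasDerivAt_tiltedMean hε t)).div_const 2).sub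
    (hasDerivAt_cgf hε t)).congr_deriv ?_
  ring

lemma exists_sign_change_criticalValue (hε : 0 < ε) {τ : ℝ} (hτ : 0 < τ)
    (hlt : ∀ t ∈ Ioo 0 τ, tiltedMean ε t < t * tiltedVar ε t)
    (hgt : ∀ t ∈ Ioi τ, t * tiltedVar ε t < tiltedMean ε t) :
    ∃ t₀, τ < t₀ ∧ criticalValue ε t₀ = 0 ∧ (∀ t ∈ Ioo 0 t₀, 0 < criticalValue ε t) ∧
      ∀ t ∈ Ioi t₀, criticalValue ε t < 0 := by
  have hderiv := hasDerivAt_criticalValue hε.le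
  have hcont : Continuous (criticalValue ε) :=
    continuous_iff_continuousAt.2 fun t => (hderiv t).continuousAt
  have hmono : StrictMonoOn (criticalValue ε) (Icc 0 τ) := by
    refine strictMonoOn_of_hasDerivWithinAt_pos (convex_Icc 0 τ) hcont.continuousOn
      (fun t _ => (hderiv t).hasDerivWithinAt) fun t ht => ?_
    rw [interior_Icc] at ht
    linarith [hlt t ht]
  have hanti : StrictAntiOn (criticalValue ε) (Ici τ) := by
    refine strictAntiOn_of_hasDerivWithinAt_neg (convex_Ici τ) hcont.continuousOn
      (fun t _ => (hderiv t).hasDerivWithinAt) fun t ht => ?_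
    rw [interior_Ici] at ht
    linarith [hgt t ht]
  have hpos : ∀ t ∈ Ioc 0 τ, 0 < criticalValue ε t := fun t ht => by
    simpa [criticalValue, tiltedMean_zero, cgf_zero] using
      hmono ⟨le_rfl, hτ.le⟩ ⟨ht.1.le, ht.2⟩ ht.1
  -- For `t ≥ 0`, `criticalValue ε t ≤ L - t / 2` as `tiltedMean ε t ≤ 1`.
  set L := log (1 + 2 * ε) - log ε
  set b := max τ (2 * L + 1)
  have hb : criticalValue ε b < 0 := by
    have hb0 : 0 < b := hτ.trans_le (le_max_left _ _)
    have h1 := abs_add_log_le_cgf hε b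
    have h2 := (abs_le.1 (abs_tiltedMean_lt_one hε.le b).le).2
    rw [abs_of_pos hb0] at h1
    have := le_max_right τ (2 * L + 1)
    rw [criticalValue]
    nlinarith
  exact exists_sign_change_of_strictAntiOn hτ hcont.continuousOn hpos hanti (le_max_left _ _) hb

lemma dualFreeEnergy_abs (t : ℝ) : dualFreeEnergy ε κ |t| = dualFreeEnergy ε κ t := by
  rcases abs_choice t with h | h <;> rw [h]
  exact dualFreeEnergy_neg t

lemma dualMinimizers_of_forall_lt_stationaryCoupling (hε : 0 < ε) (hκ : 0 < κ)
    (h : ∀ s > 0, κ < stationaryCoupling ε s) : dualMinimizers ε κ = {0} := by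
  have hmono : StrictMonoOn (dualFreeEnergy ε κ) (Ici 0) :=
    dualFreeEnergy_strictMonoOn hε.le hκ (convex_Ici 0) fun s hs => by
      rw [interior_Ici] at hs
      exact (mul_tiltedMean_lt_iff hε hs).2 (h s hs)
  have hpos : ∀ t ≠ 0, 0 < dualFreeEnergy ε κ t := fun t ht => by
    simpa [dualFreeEnergy_zero, dualFreeEnergy_abs] using
      hmono self_mem_Ici (abs_nonneg t) (abs_pos.2 ht)
  ext t
  refine ⟨fun ht => by_contra fun h0 => ?_, fun ht s => ?_⟩
  · linarith [ht 0, hpos t h0, (dualFreeEnergy_zero : dualFreeEnergy ε κ 0 = 0)]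
  · rw [mem_singleton_iff.1 ht, dualFreeEnergy_zero]
    rcases eq_or_ne s 0 with rfl | hs
    exacts [dualFreeEnergy_zero.ge, (hpos s hs).le]

lemma min_zero_lt_dualFreeEnergy (hε : 0 < ε) {τ t₂ t : ℝ} (hτ : 0 < τ)
    (hanti : StrictAntiOn (stationaryCoupling ε) (Ioc 0 τ))
    (hmono : StrictMonoOn (stationaryCoupling ε) (Ici τ)) (hτt₂ : τ ≤ t₂) (ht : 0 < t)
    (hne : t ≠ t₂) :
    min 0 (dualFreeEnergy ε (stationaryCoupling ε t₂) t₂) <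
      dualFreeEnergy ε (stationaryCoupling ε t₂) t := by
  have ht₂ : 0 < t₂ := hτ.trans_le hτt₂
  set Λ := stationaryCoupling ε
  have hκ : 0 < Λ t₂ := stationaryCoupling_pos hε ht₂
  -- `Λ` is strictly quasiconvex on `(0, ∞)`; this locates where `dualFreeEnergy` is monotone.
  have hquasi {a s b : ℝ} : 0 < a → a < s → s < b → Λ s < max (Λ a) (Λ b) :=
    lt_max_of_strictAntiOn_of_strictMonoOn hanti hmono
  rcases hne.lt_or_gt with htt₂ | htt₂
  · rcases lt_or_ge (Λ t) (Λ t₂) with hΛt | hΛt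
    · refine (min_le_right _ _).trans_lt <| dualFreeEnergy_strictAntiOn hε.le hκ
        (convex_Icc t t₂) (fun s hs => ?_) ⟨le_rfl, htt₂.le⟩ ⟨htt₂.le, le_rfl⟩ htt₂
      rw [interior_Icc] at hs
      exact (lt_mul_tiltedMean_iff hε (ht.trans hs.1)).2
        ((hquasi ht hs.1 hs.2).trans_le (max_le hΛt.le le_rfl))
    · have := dualFreeEnergy_strictMonoOn hε.le hκ (convex_Icc 0 t) (fun s hs => ?_)
        ⟨le_rfl, ht.le⟩ ⟨ht.le, le_rfl⟩ ht
      · rw [dualFreeEnergy_zero] at this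
        exact (min_le_left _ _).trans_lt this
      rw [interior_Icc] at hs
      have hΛs := (lt_max_iff.1 (hquasi hs.1 hs.2 htt₂)).resolve_right hΛt.not_gt
      exact (mul_tiltedMean_lt_iff hε hs.1).2 (hΛt.trans_lt hΛs)
  · refine (min_le_right _ _).trans_lt <| dualFreeEnergy_strictMonoOn hε.le hκ
      (convex_Icc t₂ t) (fun s hs => ?_) ⟨le_rfl, htt₂.le⟩ ⟨htt₂.le, le_rfl⟩ htt₂
    rw [interior_Icc] at hs
    exact (mul_tiltedMean_lt_iff hε (ht₂.trans hs.1)).2 (hmono hτt₂ (hτt₂.trans hs.1.le) hs.1)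

lemma dualMinimizers_stationaryCoupling (hε : 0 < ε) {τ t₂ : ℝ} (hτ : 0 < τ)
    (hanti : StrictAntiOn (stationaryCoupling ε) (Ioc 0 τ))
    (hmono : StrictMonoOn (stationaryCoupling ε) (Ici τ)) (hτt₂ : τ ≤ t₂) :
    dualMinimizers ε (stationaryCoupling ε t₂) =
      {t | t = 0 ∧ 0 ≤ criticalValue ε t₂ ∨ (t = t₂ ∨ t = -t₂) ∧ criticalValue ε t₂ ≤ 0} := by
  unfold dualMinimizers
  set G := dualFreeEnergy ε (stationaryCoupling ε t₂)
  set r := criticalValue ε t₂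
  have hG₀ : G 0 = 0 := dualFreeEnergy_zero
  have hG₂ : ∀ t, t = t₂ ∨ t = -t₂ → G t = r := by
    rintro t (rfl | rfl)
    all_goals simp only [G, r, dualFreeEnergy_neg,
      dualFreeEnergy_stationaryCoupling hε (hτ.trans_le hτt₂)]
  have hlt : ∀ t, t ≠ 0 → ¬(t = t₂ ∨ t = -t₂) → min 0 r < G t := fun t h0 h₂ => by
    rw [← hG₂ t₂ (.inl rfl), show G t = G |t| from (dualFreeEnergy_abs t).symm]
    refine min_zero_lt_dualFreeEnergy hε hτ hanti hmono hτt₂ (abs_pos.2 h0) fun h => h₂ ?_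
    rcases abs_choice t with h' | h' <;> rw [h'] at h
    exacts [.inl h, .inr (neg_eq_iff_eq_neg.1 h)]
  have hge : ∀ t, min 0 r ≤ G t := fun t => by
    by_cases h0 : t = 0
    · rw [h0, hG₀]
      exact min_le_left _ _
    by_cases h₂ : t = t₂ ∨ t = -t₂
    · rw [hG₂ t h₂]
      exact min_le_right _ _
    · exact (hlt t h0 h₂).le
  ext t
  refine ⟨fun hmin => ?_, ?_⟩
  · by_cases h0 : t = 0
    · exact .inl ⟨h0, by simpa [h0, hG₀, hG₂ t₂ (.inl rfl)] using hmin t₂⟩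
    by_cases h₂ : t = t₂ ∨ t = -t₂
    · exact .inr ⟨h₂, by simpa [hG₀, hG₂ t h₂] using hmin 0⟩
    · exact absurd (le_min (hG₀ ▸ hmin 0) (hG₂ t₂ (.inl rfl) ▸ hmin t₂)) (hlt t h0 h₂).not_ge
  · rintro (⟨rfl, hr⟩ | ⟨h₂, hr⟩) s
    · rw [hG₀, ← min_eq_left hr]
      exact hge s
    · rw [hG₂ t h₂, ← min_eq_right hr]
      exact hge s

section
variable {τ t₂ : ℝ} (hε : 0 < ε) (hτ : 0 < τ)
  (hanti : StrictAntiOn (stationaryCoupling ε) (Ioc 0 τ))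
  (hmono : StrictMonoOn (stationaryCoupling ε) (Ici τ)) (hτt₂ : τ ≤ t₂)
  (hκ : stationaryCoupling ε t₂ = κ)
include hε hτ hanti hmono hτt₂ hκ

lemma dualMinimizers_of_criticalValue_pos (hr : 0 < criticalValue ε t₂) :
    dualMinimizers ε κ = {0} := by
  subst hκ
  ext t
  simp [dualMinimizers_stationaryCoupling hε hτ hanti hmono hτt₂, hr.le, hr.not_ge]

lemma dualMinimizers_of_criticalValue_eq_zero (hr : criticalValue ε t₂ = 0) :
    dualMinimizers ε κ = {0, t₂, -t₂} := by
  subst hκ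
  ext t
  simp [dualMinimizers_stationaryCoupling hε hτ hanti hmono hτt₂, hr]

lemma dualMinimizers_of_criticalValue_neg (hr : criticalValue ε t₂ < 0) :
    dualMinimizers ε κ = {t₂, -t₂} := by
  subst hκ
  ext t
  simp [dualMinimizers_stationaryCoupling hε hτ hanti hmono hτt₂, hr.le, hr.not_ge]

end

theorem exists_critical_coupling (hε : 0 < ε) (hε4 : ε < 1 / 4) :
    ∃ κc > 0, ∃ t₂ : ℝ → ℝ,
      (∀ κ, 0 < κ → κ < κc → dualMinimizers ε κ = {0}) ∧
      (0 < t₂ κc ∧ dualMinimizers ε κc = {0, t₂ κc, -t₂ κc}) ∧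
      (∀ κ, κc < κ → 0 < t₂ κ ∧ dualMinimizers ε κ = {t₂ κ, -t₂ κ}) ∧
      StrictMonoOn t₂ (Ici κc) ∧ ContinuousOn t₂ (Ici κc) := by
  obtain ⟨τ, hτ, hlt, hgt⟩ := exists_sign_change_mul_tiltedVar_sub_tiltedMean hε hε4
  obtain ⟨hanti, hmono⟩ := stationaryCoupling_unimodal hε hτ hlt hgt
  obtain ⟨t₀, hτt₀, hr₀, hrpos, hrneg⟩ := exists_sign_change_criticalValue hε hτ hlt hgt
  -- `g κ` is the largest stationary point of `dualFreeEnergy ε κ`.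
  obtain ⟨g, hg_mono, hg_cont, hg⟩ := exists_strictMonoOn_rightInvOn_Ici hmono
    ((continuousOn_stationaryCoupling hε).mono (Ici_subset_Ioi.2 hτ))
    (tendsto_stationaryCoupling_atTop hε)
  have hΛτ : ∀ s > 0, stationaryCoupling ε τ ≤ stationaryCoupling ε s := fun s hs => by
    rcases le_total s τ with hsτ | hτs
    exacts [hanti.antitoneOn ⟨hs, hsτ⟩ ⟨hτ, le_rfl⟩ hsτ, hmono.monotoneOn self_mem_Ici hτs hτs]
  have hΛ₀ : stationaryCoupling ε t₀ ∈ Ici (stationaryCoupling ε τ) := hΛτ t₀ (hτ.trans hτt₀)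
  have hg₀ : g (stationaryCoupling ε t₀) = t₀ := hmono.injOn (hg _ hΛ₀).1 hτt₀.le (hg _ hΛ₀).2
  refine ⟨stationaryCoupling ε t₀, stationaryCoupling_pos hε (hτ.trans hτt₀), g,
    fun κ hκ hκ₀ => ?_, ?_, fun κ hκ => ?_, hg_mono.mono (Ici_subset_Ici.2 hΛ₀),
    hg_cont.mono (Ici_subset_Ici.2 hΛ₀)⟩
  · rcases lt_or_ge κ (stationaryCoupling ε τ) with hκτ | hκτ
    · exact dualMinimizers_of_forall_lt_stationaryCoupling hε hκ fun s hs =>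
        hκτ.trans_le (hΛτ s hs)
    have hgκ : g κ < t₀ := hg₀ ▸ hg_mono hκτ hΛ₀ hκ₀
    exact dualMinimizers_of_criticalValue_pos hε hτ hanti hmono (hg κ hκτ).1 (hg κ hκτ).2
      (hrpos _ ⟨hτ.trans_le (hg κ hκτ).1, hgκ⟩)
  · rw [hg₀]
    exact ⟨hτ.trans hτt₀, dualMinimizers_of_criticalValue_eq_zero hε hτ hanti hmono hτt₀.le rfl hr₀⟩
  · have hκτ : κ ∈ Ici (stationaryCoupling ε τ) := le_trans hΛ₀ hκ.le
    have hgκ : t₀ < g κ := hg₀ ▸ hg_mono hΛ₀ hκτ hκ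
    exact ⟨hτ.trans (hτt₀.trans hgκ), dualMinimizers_of_criticalValue_neg hε hτ hanti hmono
      (hg κ hκτ).1 (hg κ hκτ).2 (hrneg _ hgκ)⟩

end BlumeCapel

open BlumeCapel

/-- Fix `β > log 4`.  There is a critical value `K_c^{(1)}(β) > 0`
such that: (a) for `0 < K < K_c^{(1)}(β)`, `Ẽ_{β,K} = {0}`; (b) for `K = K_c^{(1)}(β)`,
`Ẽ_{β,K} = {0, z̃(β,K), −z̃(β,K)}` with `z̃(β,K) > 0`; (c) for `K > K_c^{(1)}(β)`,
`Ẽ_{β,K} = {z̃(β,K), −z̃(β,K)}` with `z̃(β,K) > 0`; (d) `K ↦ z̃(β,K)` is strictly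
increasing and continuous on `[K_c^{(1)}(β), ∞)`, and `z̃(β, K_c^{(1)}(β)) > 0`. -/
theorem tildeE_structure_first_order (β : ℝ) (hβ : Real.log 4 < β) :
    ∃ Kc1 : ℝ, 0 < Kc1 ∧
      ∃ ztilde : ℝ → ℝ,
        (∀ K : ℝ, 0 < K → K < Kc1 → tildeE β K = {0}) ∧
        (0 < ztilde Kc1 ∧ tildeE β Kc1 = {0, ztilde Kc1, -ztilde Kc1}) ∧
        (∀ K : ℝ, Kc1 < K → 0 < ztilde K ∧ tildeE β K = {ztilde K, -ztilde K}) ∧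
        StrictMonoOn ztilde (Set.Ici Kc1) ∧
        ContinuousOn ztilde (Set.Ici Kc1) := by
  have hβ₀ : 0 < β := (log_pos (by norm_num)).trans hβ
  have hε : 0 < exp (-β) := exp_pos _
  have hε4 : exp (-β) < 1 / 4 := by
    rw [one_div, ← exp_log (by norm_num : (0 : ℝ) < 4), ← exp_neg]
    exact exp_lt_exp.2 (neg_lt_neg hβ)
  obtain ⟨κc, hκc, t₂, hsub, ⟨hcrit₀, hcrit⟩, hsup, hmono, hcont⟩ :=
    exists_critical_coupling hε hε4
  have hscale : MapsTo (fun K => 2 * β * K) (Ici (κc / (2 * β))) (Ici κc) := fun K hK => by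
    simpa [div_le_iff₀', hβ₀] using hK
  have hKc : 2 * β * (κc / (2 * β)) = κc := by field_simp
  refine ⟨κc / (2 * β), by positivity, fun K => tiltedMean (exp (-β)) (t₂ (2 * β * K)),
    fun K hK hKc' => ?_, ?_, fun K hK => ?_, ?_, ?_⟩
  · rw [tildeE_eq_image hβ₀ hK,
      hsub _ (by positivity) (by rwa [lt_div_iff₀' (by positivity)] at hKc')]
    simp [tiltedMean_zero]
  · simp only [hKc]
    refine ⟨tiltedMean_pos hε hcrit₀, ?_⟩
    rw [tildeE_eq_image hβ₀ (by positivity), hKc, hcrit]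
    simp [image_insert_eq, tiltedMean_zero, tiltedMean_neg]
  · obtain ⟨hpos, hmin⟩ := hsup _ (by rwa [div_lt_iff₀' (by positivity)] at hK)
    refine ⟨tiltedMean_pos hε hpos, ?_⟩
    rw [tildeE_eq_image hβ₀ ((div_pos hκc (by positivity)).trans hK), hmin]
    simp [image_insert_eq, tiltedMean_neg]
  · exact (tiltedMean_strictMono hε).comp_strictMonoOn (hmono.comp
      (fun _ _ _ _ h => by gcongr) hscale)
  · exact (continuous_tiltedMean hε.le).comp_continuousOn (hcont.comp (by fun_prop) hscale)
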